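/- arXiv:1401.0230 — 2 statements merged into one kernel-verified Lean document; each statement's English description precedes it below -/
import Mathlib

section
/- (Fundamental equalities for oscillatory eigenmodes) Assume θ = 0. Let ζ ∈ ℂ and q ∈ ℂ^N with q ≠ 0, C(ζ,β)q = 0, and Re ζ ≠ 0. Then (β/2)·⟨q, Rq⟩/⟨q, αq⟩ = −Im ζ, |ζ|² = ⟨q, ηq⟩/⟨q, αq⟩, and −Im ζ < |ζ| ≤ ω_max. -/
open Matrix
open scoped ComplexOrder

noncomputable section

variable {N : ℕ}

/-- A real matrix viewed as a complex matrix. -/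
def cm (M : Matrix (Fin N) (Fin N) ℝ) : Matrix (Fin N) (Fin N) ℂ :=
  M.map Complex.ofReal

/-- The quadratic matrix pencil `C(ζ,β) = ζ²α + iζ(2θ + βR) − η`. -/
def pencil (α η θ R : Matrix (Fin N) (Fin N) ℝ) (β : ℝ) (ζ : ℂ) :
    Matrix (Fin N) (Fin N) ℂ :=
  ζ ^ 2 • cm α + (Complex.I * ζ) • ((2 : ℂ) • cm θ + (β : ℂ) • cm R) - cm η

/-- `K_p = (√α)⁻¹`. -/
def Kp {α : Matrix (Fin N) (Fin N) ℝ} (hα : (cm α).PosDef) : Matrix (Fin N) (Fin N) ℂ :=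
  ((hα.posSemidef.1.eigenvectorUnitary : Matrix (Fin N) (Fin N) ℂ) *
    diagonal ((↑) ∘ Real.sqrt ∘ hα.posSemidef.1.eigenvalues) *
    (star hα.posSemidef.1.eigenvectorUnitary : Matrix (Fin N) (Fin N) ℂ))⁻¹

/-- `Φ = √η · K_p`. -/
def Phi {α η : Matrix (Fin N) (Fin N) ℝ} (hα : (cm α).PosDef) (hη : (cm η).PosSemidef) :
    Matrix (Fin N) (Fin N) ℂ :=
  ((hη.1.eigenvectorUnitary : Matrix (Fin N) (Fin N) ℂ) *
    diagonal ((↑) ∘ Real.sqrt ∘ hη.1.eigenvalues) *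
    (star hη.1.eigenvectorUnitary : Matrix (Fin N) (Fin N) ℂ)) * Kp hα

/-- `R̃ = K_p R K_p`. -/
def Rt (R : Matrix (Fin N) (Fin N) ℝ) {α : Matrix (Fin N) (Fin N) ℝ} (hα : (cm α).PosDef) :
    Matrix (Fin N) (Fin N) ℂ :=
  Kp hα * cm R * Kp hα

/-- `Ω_p = −2i K_p θ K_p`. -/
def Omp (θ : Matrix (Fin N) (Fin N) ℝ) {α : Matrix (Fin N) (Fin N) ℝ} (hα : (cm α).PosDef) :
    Matrix (Fin N) (Fin N) ℂ :=
  ((-2 : ℂ) * Complex.I) • (Kp hα * cm θ * Kp hα)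

/-- `Ω = [[Ω_p, −iΦᵀ],[iΦ, 0]]`. -/
def Om (θ : Matrix (Fin N) (Fin N) ℝ) {α η : Matrix (Fin N) (Fin N) ℝ}
    (hα : (cm α).PosDef) (hη : (cm η).PosSemidef) :
    Matrix (Fin N ⊕ Fin N) (Fin N ⊕ Fin N) ℂ :=
  fromBlocks (Omp θ hα) ((-Complex.I) • (Phi hα hη)ᵀ) (Complex.I • Phi hα hη) 0

/-- `B = [[R̃, 0],[0, 0]]`. -/
def Bm (R : Matrix (Fin N) (Fin N) ℝ) {α : Matrix (Fin N) (Fin N) ℝ} (hα : (cm α).PosDef) :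
    Matrix (Fin N ⊕ Fin N) (Fin N ⊕ Fin N) ℂ :=
  fromBlocks (Rt R hα) 0 0 0

/-- The system operator `A(β) = Ω − iβB`. -/
def Asys (θ R : Matrix (Fin N) (Fin N) ℝ) {α η : Matrix (Fin N) (Fin N) ℝ}
    (hα : (cm α).PosDef) (hη : (cm η).PosSemidef) (β : ℝ) :
    Matrix (Fin N ⊕ Fin N) (Fin N ⊕ Fin N) ℂ :=
  Om θ hα hη - (Complex.I * (β : ℂ)) • Bm R hα

/-- The ℓ²→ℓ² operator norm of a complex matrix. -/
def opN {n : Type*} [Fintype n] [DecidableEq n] (M : Matrix n n ℂ) : ℝ :=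
  ‖Matrix.toEuclideanCLM (𝕜 := ℂ) M‖

/-- `ω_max = ‖Ω‖`. -/
def omegaMax (θ : Matrix (Fin N) (Fin N) ℝ) {α η : Matrix (Fin N) (Fin N) ℝ}
    (hα : (cm α).PosDef) (hη : (cm η).PosSemidef) : ℝ :=
  opN (Om θ hα hη)

/-- `b_min`, the smallest nonzero eigenvalue of `B`. -/
def bMin (R : Matrix (Fin N) (Fin N) ℝ) {α : Matrix (Fin N) (Fin N) ℝ} (hα : (cm α).PosDef) : ℝ :=
  sInf {r : ℝ | r ≠ 0 ∧ (r : ℂ) ∈ spectrum ℂ (Bm R hα)}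

/-!
Pairing the mode equation with `q` gives the scalar equation `ζ²a + iζβr − e = 0`, where
`a = ⟨q, αq⟩ > 0`, `r = ⟨q, Rq⟩` and `e = ⟨q, ηq⟩` are real. Its imaginary part is
`Re ζ · (2 Im ζ · a + βr) = 0`, and substituting `βr = −2 Im ζ · a` into its real part leaves
`|ζ|² a = e`. For the bound, `Ω` sends `(√α q, 0)` to `(Ω_p √α q, i √η q)`, a vector of squared
norm at least `e`, while `(√α q, 0)` has squared norm `a`; hence `e ≤ ‖Ω‖² a`.
-/

open scoped MatrixOrder

namespace Matrix

variable {n : Type*} [Fintype n]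

theorem star_mulVec_dotProduct_mulVec (S : Matrix n n ℂ) (q : n → ℂ) :
    star (S *ᵥ q) ⬝ᵥ (S *ᵥ q) = star q ⬝ᵥ ((Sᴴ * S) *ᵥ q) := by
  rw [star_mulVec, dotProduct_mulVec, vecMul_vecMul, ← dotProduct_mulVec]

theorem re_star_dotProduct_self (v : n → ℂ) :
    (star v ⬝ᵥ v).re = ‖WithLp.toLp 2 v‖ ^ 2 := by
  rw [← inner_self_eq_norm_sq (𝕜 := ℂ), EuclideanSpace.inner_eq_star_dotProduct, dotProduct_comm]
  rfl

theorem IsHermitian.star_dotProduct_mulVec_self_eq_re {M : Matrix n n ℂ} (hM : M.IsHermitian)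
    (q : n → ℂ) : star q ⬝ᵥ (M *ᵥ q) = ((star q ⬝ᵥ (M *ᵥ q)).re : ℂ) :=
  Complex.ext rfl (by simpa using hM.im_star_dotProduct_mulVec_self q)

variable [DecidableEq n]

theorem re_star_mulVec_dotProduct_mulVec_le (M : Matrix n n ℂ) (z : n → ℂ) :
    (star (M *ᵥ z) ⬝ᵥ (M *ᵥ z)).re ≤ opN M ^ 2 * (star z ⬝ᵥ z).re := by
  rw [re_star_dotProduct_self, re_star_dotProduct_self, ← mul_pow, ← toEuclideanCLM_toLp]
  exact pow_le_pow_left₀ (norm_nonneg _) ((toEuclideanCLM (𝕜 := ℂ) M).le_opNorm _) 2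

theorem PosSemidef.eigenvectorUnitary_mul_diagonal_sqrt {M : Matrix n n ℂ} (hM : M.PosSemidef) :
    (hM.1.eigenvectorUnitary : Matrix n n ℂ) * diagonal ((↑) ∘ Real.sqrt ∘ hM.1.eigenvalues) *
      (star hM.1.eigenvectorUnitary : Matrix n n ℂ) = CFC.sqrt M := by
  rw [CFC.sqrt_eq_real_sqrt M hM.nonneg, cfcₙ_eq_cfc, hM.1.cfc_eq, IsHermitian.cfc,
    Unitary.conjStarAlgAut_apply]
  rfl

theorem PosSemidef.star_sqrt_mulVec_dotProduct_sqrt_mulVec {M : Matrix n n ℂ} (hM : M.PosSemidef)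
    (q : n → ℂ) : star (CFC.sqrt M *ᵥ q) ⬝ᵥ (CFC.sqrt M *ᵥ q) = star q ⬝ᵥ (M *ᵥ q) := by
  rw [star_mulVec_dotProduct_mulVec, (CFC.sqrt_nonneg M).posSemidef.1,
    CFC.sqrt_mul_sqrt_self M hM.nonneg]

end Matrix

theorem Kp_mul_sqrt {α : Matrix (Fin N) (Fin N) ℝ} (hα : (cm α).PosDef) :
    Kp hα * CFC.sqrt (cm α) = 1 := by
  have hS : IsUnit (CFC.sqrt (cm α)) :=
    isUnit_of_mul_isUnit_left (CFC.sqrt_mul_sqrt_self _ hα.posSemidef.nonneg ▸ hα.isUnit)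
  rw [Kp, hα.posSemidef.eigenvectorUnitary_mul_diagonal_sqrt]
  exact nonsing_inv_mul _ ((isUnit_iff_isUnit_det _).mp hS)

theorem Om_mulVec_sumElim_sqrt (θ : Matrix (Fin N) (Fin N) ℝ) {α η : Matrix (Fin N) (Fin N) ℝ}
    (hα : (cm α).PosDef) (hη : (cm η).PosSemidef) (q : Fin N → ℂ) :
    Om θ hα hη *ᵥ Sum.elim (CFC.sqrt (cm α) *ᵥ q) 0 =
      Sum.elim (Omp θ hα *ᵥ (CFC.sqrt (cm α) *ᵥ q)) (Complex.I • (CFC.sqrt (cm η) *ᵥ q)) := by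
  have hPhi : Phi hα hη * CFC.sqrt (cm α) = CFC.sqrt (cm η) := by
    rw [Phi, hη.eigenvectorUnitary_mul_diagonal_sqrt, Matrix.mul_assoc, Kp_mul_sqrt, mul_one]
  simp [Om, fromBlocks_mulVec, smul_mulVec, mulVec_mulVec, hPhi]

theorem re_quadForm_le_omegaMax_sq_mul (θ : Matrix (Fin N) (Fin N) ℝ)
    {α η : Matrix (Fin N) (Fin N) ℝ}
    (hα : (cm α).PosDef) (hη : (cm η).PosSemidef) (q : Fin N → ℂ) :
    (star q ⬝ᵥ (cm η *ᵥ q)).re ≤ omegaMax θ hα hη ^ 2 * (star q ⬝ᵥ (cm α *ᵥ q)).re := by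
  set z := Sum.elim (CFC.sqrt (cm α) *ᵥ q) 0
  calc (star q ⬝ᵥ (cm η *ᵥ q)).re
      ≤ (star (Om θ hα hη *ᵥ z) ⬝ᵥ (Om θ hα hη *ᵥ z)).re := by
        rw [Om_mulVec_sumElim_sqrt, Function.star_sumElim, sumElim_dotProduct_sumElim,
          star_smul, smul_dotProduct, dotProduct_smul, hη.star_sqrt_mulVec_dotProduct_sqrt_mulVec]
        simp [re_star_dotProduct_self]
    _ ≤ omegaMax θ hα hη ^ 2 * (star z ⬝ᵥ z).re := re_star_mulVec_dotProduct_mulVec_le _ z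
    _ = omegaMax θ hα hη ^ 2 * (star q ⬝ᵥ (cm α *ᵥ q)).re := by
        rw [Function.star_sumElim, sumElim_dotProduct_sumElim,
          hα.posSemidef.star_sqrt_mulVec_dotProduct_sqrt_mulVec]
        simp

theorem cm_zero : cm (0 : Matrix (Fin N) (Fin N) ℝ) = 0 :=
  Matrix.map_zero _ Complex.ofReal_zero

theorem star_dotProduct_pencil_mulVec (α η θ R : Matrix (Fin N) (Fin N) ℝ) (β : ℝ) (ζ : ℂ)
    (q : Fin N → ℂ) :
    star q ⬝ᵥ (pencil α η θ R β ζ *ᵥ q) =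
      ζ ^ 2 * (star q ⬝ᵥ (cm α *ᵥ q)) +
        Complex.I * ζ * (2 * (star q ⬝ᵥ (cm θ *ᵥ q)) + β * (star q ⬝ᵥ (cm R *ᵥ q))) -
          star q ⬝ᵥ (cm η *ᵥ q) := by
  simp only [pencil, add_mulVec, sub_mulVec, smul_mulVec, dotProduct_add, dotProduct_sub,
    dotProduct_smul, smul_eq_mul]

theorem Complex.two_im_mul_add_eq_zero_and_norm_sq_mul_eq {ζ : ℂ} (hζ : ζ.re ≠ 0) {a b e : ℝ}
    (h : ζ ^ 2 * a + I * ζ * b - e = 0) : 2 * ζ.im * a + b = 0 ∧ ‖ζ‖ ^ 2 * a = e := by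
  have hre := congrArg re h
  have him := congrArg im h
  simp only [pow_two, sub_re, add_re, sub_im, add_im, mul_re, mul_im, ofReal_re, ofReal_im,
    I_re, I_im, zero_re, zero_im] at hre him
  have hbalance : 2 * ζ.im * a + b = 0 :=
    (mul_eq_zero.1 (show ζ.re * (2 * ζ.im * a + b) = 0 by linarith)).resolve_left hζ
  refine ⟨hbalance, ?_⟩
  rw [Complex.sq_norm, normSq_apply]
  linear_combination hre + ζ.im * hbalance

theorem fundamental_equalities_oscillatory_general
    {N : ℕ}
    (α η R : Matrix (Fin N) (Fin N) ℝ)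
    (hα : (cm α).PosDef) (hη : (cm η).PosSemidef)
    (hR : (cm R).PosSemidef)
    (β : ℝ)
    (ζ : ℂ) (hζ : ζ.re ≠ 0) (q : Fin N → ℂ) (hq : q ≠ 0)
    (hmode : pencil α η 0 R β ζ *ᵥ q = 0) :
    β / 2 * ((star q ⬝ᵥ (cm R *ᵥ q)).re / (star q ⬝ᵥ (cm α *ᵥ q)).re) = -ζ.im ∧
    ‖ζ‖ ^ 2 = (star q ⬝ᵥ (cm η *ᵥ q)).re / (star q ⬝ᵥ (cm α *ᵥ q)).re ∧
    -ζ.im < ‖ζ‖ ∧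
    ‖ζ‖ ≤ omegaMax 0 hα hη := by
  have hquad := star_dotProduct_pencil_mulVec α η 0 R β ζ q
  rw [hmode, dotProduct_zero, cm_zero, zero_mulVec, dotProduct_zero, mul_zero, zero_add,
    hα.1.star_dotProduct_mulVec_self_eq_re, hR.1.star_dotProduct_mulVec_self_eq_re,
    hη.1.star_dotProduct_mulVec_self_eq_re, ← Complex.ofReal_mul] at hquad
  obtain ⟨hbalance, hnorm⟩ := Complex.two_im_mul_add_eq_zero_and_norm_sq_mul_eq hζ hquad.symm
  have ha : 0 < (star q ⬝ᵥ (cm α *ᵥ q)).re := (Complex.lt_def.1 (hα.dotProduct_mulVec_pos hq)).1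
  refine ⟨by field_simp; linarith, by field_simp; linarith,
    (neg_le_abs _).trans_lt (Complex.abs_im_lt_norm.2 hζ), ?_⟩
  have hbound := re_quadForm_le_omegaMax_sq_mul 0 hα hη q
  rw [← hnorm] at hbound
  exact (pow_le_pow_iff_left₀ (norm_nonneg ζ) (norm_nonneg _) two_ne_zero).1
    (le_of_mul_le_mul_right hbound ha)

/-- **Fundamental equalities for oscillatory eigenmodes** (`θ = 0`). If `C(ζ,β)q = 0`,
`q ≠ 0` and `Re ζ ≠ 0`, then `(β/2)⟨q,Rq⟩/⟨q,αq⟩ = −Im ζ`, `|ζ|² = ⟨q,ηq⟩/⟨q,αq⟩`,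
and `−Im ζ < |ζ| ≤ ω_max`. -/
theorem fundamental_equalities_oscillatory
    {N : ℕ} (hN : 1 ≤ N)
    (α η R : Matrix (Fin N) (Fin N) ℝ)
    (hα : (cm α).PosDef) (hη : (cm η).PosSemidef)
    (hR : (cm R).PosSemidef) (hR0 : R ≠ 0)
    (β : ℝ) (hβ : 0 ≤ β)
    (ζ : ℂ) (hζ : ζ.re ≠ 0) (q : Fin N → ℂ) (hq : q ≠ 0)
    (hmode : pencil α η 0 R β ζ *ᵥ q = 0) :
    β / 2 * ((star q ⬝ᵥ (cm R *ᵥ q)).re / (star q ⬝ᵥ (cm α *ᵥ q)).re) = -ζ.im ∧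
    ‖ζ‖ ^ 2 = (star q ⬝ᵥ (cm η *ᵥ q)).re / (star q ⬝ᵥ (cm α *ᵥ q)).re ∧
    -ζ.im < ‖ζ‖ ∧
    ‖ζ‖ ≤ omegaMax 0 hα hη :=
  fundamental_equalities_oscillatory_general α η R hα hη hR β ζ hζ q hq hmode
end
end

section
/- (Dimension of the kernel of the reduced frequency operator) Assume θ = 0 and the nondegeneracy condition ker η ∩ ker R = {0} (kernels taken in ℂ^N). Let Ω₁ denote the restriction of Ω to the no-loss subspace ker B, compressed by the orthogonal projection onto ker B; since B is Hermitian, its kernel equals { w ∈ ℂ^{2N} : Bw = 0 ∧ Ωw ∈ range B }. Then dim_ℂ { w ∈ ℂ^{2N} : Bw = 0 and Ωw ∈ range B } = N_R, where N_R = rank R = rank B. (Equivalently, dim ker Ω₁ = N_R.) -/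
open Matrix
open scoped ComplexOrder

noncomputable section

variable {N : ℕ}

/-! With `θ = 0`, a vector `w = (x, y)` lies in the subspace iff `R̃ x = 0`, `Φ x = 0` and
`Φᵀ y ∈ range R̃`. Nondegeneracy, transported through the invertible symmetric `K_p`, forces
`x = 0` and, read through transposes, says `range Φᵀ + range R̃ = ℂᴺ`. For a linear map `f` with
`U + range f` the whole codomain, `dim f⁻¹(U) = dim U + dim (domain) − dim (codomain)`; with
`f = Φᵀ` and `U = range R̃` this gives `rank R̃ = rank R`. -/

section LinearAlgebra

theorem Submodule.finrank_comap_add_finrank_eq_of_sup_range_eq_top {K V W : Type*}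
    [DivisionRing K] [AddCommGroup V] [Module K V] [AddCommGroup W] [Module K W]
    [FiniteDimensional K V] [FiniteDimensional K W]
    {f : V →ₗ[K] W} {U : Submodule K W} (h : U ⊔ LinearMap.range f = ⊤) :
    Module.finrank K (U.comap f) + Module.finrank K W =
      Module.finrank K U + Module.finrank K V := by
  have hker : LinearMap.ker (U.mkQ ∘ₗ f) = U.comap f := by
    rw [LinearMap.ker_comp, Submodule.ker_mkQ]
  have hrange : LinearMap.range (U.mkQ ∘ₗ f) = ⊤ := by
    rw [LinearMap.range_comp, Submodule.map_mkQ_eq_top, h]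
  have hrank := (U.mkQ ∘ₗ f).finrank_range_add_finrank_ker
  rw [hker, hrange, finrank_top] at hrank
  have hquot := U.finrank_quotient_add_finrank
  omega

variable {K m n p : Type*}

theorem Matrix.range_mulVecLin_fromCols [CommSemiring K] [Fintype n] [Fintype p]
    (A : Matrix m n K) (B : Matrix m p K) :
    LinearMap.range (fromCols A B).mulVecLin =
      LinearMap.range A.mulVecLin ⊔ LinearMap.range B.mulVecLin := by
  have : (fromCols A B).mulVecLin = (A.mulVecLin.coprod B.mulVecLin) ∘ₗ
      (LinearEquiv.sumArrowLequivProdArrow n p K K).toLinearMap := by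
    ext v i
    simp [fromCols_mulVec]
    rfl
  rw [this, LinearMap.range_comp_of_range_eq_top _ (LinearEquiv.range _), LinearMap.range_coprod]

theorem Matrix.range_mulVecLin_sup_eq_top [Field K] [Fintype m] [Fintype n] [Fintype p]
    {A : Matrix m n K} {B : Matrix m p K} (h : ∀ x, Aᵀ *ᵥ x = 0 → Bᵀ *ᵥ x = 0 → x = 0) :
    LinearMap.range A.mulVecLin ⊔ LinearMap.range B.mulVecLin = ⊤ := by
  have hinj : Function.Injective (fromCols A B)ᵀ.mulVecLin := by
    rw [← LinearMap.ker_eq_bot, LinearMap.ker_eq_bot']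
    intro x hx
    rw [transpose_fromCols, mulVecLin_apply, fromRows_mulVec, ← Sum.elim_zero_zero,
      Sum.elim_eq_iff] at hx
    exact h x hx.1 hx.2
  have hrank : (fromCols A B).rank = Module.finrank K (m → K) := by
    rw [← rank_transpose, Matrix.rank, LinearMap.finrank_range_of_inj hinj]
  rw [← range_mulVecLin_fromCols]
  exact Submodule.eq_top_of_finrank_eq hrank

theorem Matrix.rank_fromBlocks_zero_zero_zero {o q : Type*} [CommRing K] [StrongRankCondition K]
    [Fintype m] [Fintype n] [Fintype o] [Fintype q] [DecidableEq m] [DecidableEq n]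
    (A : Matrix m n K) : (fromBlocks A 0 0 0 : Matrix (m ⊕ o) (n ⊕ q) K).rank = A.rank := by
  refine le_antisymm ?_ ?_
  · have : (fromBlocks A 0 0 0 : Matrix (m ⊕ o) (n ⊕ q) K) =
        fromRows (1 : Matrix m m K) (0 : Matrix o m K) * A * fromCols (1 : Matrix n n K) 0 := by
      rw [fromRows_mul, fromRows_mul_fromCols, Matrix.one_mul, Matrix.zero_mul, Matrix.mul_one,
        Matrix.mul_zero, Matrix.zero_mul, Matrix.zero_mul]
    rw [this]
    exact (rank_mul_le_left _ _).trans (rank_mul_le_right _ _)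
  · have hA : (fromBlocks A 0 0 0 : Matrix (m ⊕ o) (n ⊕ q) K).submatrix Sum.inl Sum.inl = A := by
      ext i j
      rfl
    exact hA ▸ rank_submatrix_le _ _ _

theorem Matrix.rank_map_diagonal {L : Type*} [Field K] [Field L] [Fintype m] [DecidableEq m]
    (f : K →+* L) (w : m → K) : ((diagonal w).map f).rank = (diagonal w).rank := by
  classical
  rw [diagonal_map (map_zero f), rank_diagonal, rank_diagonal]
  simp only [ne_eq, map_eq_zero]

theorem Matrix.rank_map {L : Type*} [Field K] [Field L] [Fintype m] [DecidableEq m]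
    (f : K →+* L) (M : Matrix m m K) : (M.map f).rank = M.rank := by
  obtain ⟨V, U, e, hV, hU, hM⟩ := M.exists_rank_normal_form
  rw [← diagonal_one, ← diagonal_zero, fromBlocks_diagonal, submatrix_diagonal_equiv] at hM
  have hVf : IsUnit (V.map f).det := (isUnit_iff_isUnit_det _).1 (hV.map f.mapMatrix)
  have hUf : IsUnit (U.map f).det := (isUnit_iff_isUnit_det _).1 (hU.map f.mapMatrix)
  calc (M.map f).rank = (V.map f * M.map f * U.map f).rank := by
        rw [rank_mul_eq_left_of_isUnit_det _ _ hUf, rank_mul_eq_right_of_isUnit_det _ _ hVf]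
    _ = ((V * M * U).map f).rank := by simp only [Matrix.map_mul]
    _ = (V * M * U).rank := by rw [hM, rank_map_diagonal]
    _ = M.rank := by
        rw [rank_mul_eq_left_of_isUnit_det _ _ ((isUnit_iff_isUnit_det _).1 hU),
          rank_mul_eq_right_of_isUnit_det _ _ ((isUnit_iff_isUnit_det _).1 hV)]

end LinearAlgebra

open scoped MatrixOrder

theorem Matrix.PosSemidef.cfcSqrt_eq {n : Type*} [Fintype n] [DecidableEq n]
    {A : Matrix n n ℂ} (hA : A.PosSemidef) :
    CFC.sqrt A = (hA.1.eigenvectorUnitary : Matrix n n ℂ) *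
      diagonal ((↑) ∘ Real.sqrt ∘ hA.1.eigenvalues) *
      (star hA.1.eigenvectorUnitary : Matrix n n ℂ) := by
  rw [CFC.sqrt_eq_real_sqrt A hA.nonneg, cfcₙ_eq_cfc (hf0 := Real.sqrt_zero), hA.1.cfc_eq]
  simp [IsHermitian.cfc, Unitary.conjStarAlgAut_apply]

theorem Matrix.transpose_cfcSqrt {𝕜 n : Type*} [RCLike 𝕜] [Fintype n] [DecidableEq n]
    {A : Matrix n n 𝕜} (hA : A.PosSemidef) : (CFC.sqrt A)ᵀ = CFC.sqrt Aᵀ := by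
  refine (CFC.sqrt_unique ?_ ?_).symm
  · rw [← transpose_mul, CFC.sqrt_mul_sqrt_self A hA.nonneg]
  · exact (posSemidef_transpose_iff.2 (CFC.sqrt_nonneg A).posSemidef).nonneg

theorem cm_transpose (M : Matrix (Fin N) (Fin N) ℝ) : (cm M)ᵀ = cm Mᵀ := rfl

theorem conjTranspose_cm (M : Matrix (Fin N) (Fin N) ℝ) : (cm M)ᴴ = cm Mᵀ := by
  ext i j
  simp [cm]

theorem transpose_cm_eq_self {M : Matrix (Fin N) (Fin N) ℝ} (hM : (cm M).IsHermitian) :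
    (cm M)ᵀ = cm M := by
  rw [cm_transpose, ← conjTranspose_cm, hM]

theorem rank_cm (M : Matrix (Fin N) (Fin N) ℝ) : (cm M).rank = M.rank :=
  M.rank_map Complex.ofRealHom

section Reduction

variable {α η R : Matrix (Fin N) (Fin N) ℝ} (hα : (cm α).PosDef) (hη : (cm η).PosSemidef)

theorem Kp_eq : Kp hα = (CFC.sqrt (cm α))⁻¹ := by
  rw [Kp, hα.posSemidef.cfcSqrt_eq]

theorem Phi_eq : Phi hα hη = CFC.sqrt (cm η) * Kp hα := by
  rw [Phi, hη.cfcSqrt_eq]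

theorem Kp_transpose : (Kp hα)ᵀ = Kp hα := by
  rw [Kp_eq, transpose_nonsing_inv, transpose_cfcSqrt hα.posSemidef, transpose_cm_eq_self hα.1]

theorem isUnit_Kp : IsUnit (Kp hα) := by
  rw [Kp_eq, isUnit_nonsing_inv_iff]
  exact (CFC.isUnit_sqrt_iff _ hα.posSemidef.nonneg).2 hα.isUnit

theorem Rt_transpose (hR : (cm R).IsHermitian) : (Rt R hα)ᵀ = Rt R hα := by
  rw [Rt, transpose_mul, transpose_mul, Kp_transpose, transpose_cm_eq_self hR, Matrix.mul_assoc]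

theorem rank_Rt : (Rt R hα).rank = R.rank := by
  have hK := (isUnit_iff_isUnit_det _).1 (isUnit_Kp hα)
  rw [Rt, rank_mul_eq_left_of_isUnit_det _ _ hK, rank_mul_eq_right_of_isUnit_det _ _ hK, rank_cm]

theorem rank_Bm : (Bm R hα).rank = R.rank := by
  rw [Bm, rank_fromBlocks_zero_zero_zero, rank_Rt]

theorem eq_zero_of_Phi_mulVec_eq_zero_of_Rt_mulVec_eq_zero
    (hnd : ∀ x : Fin N → ℂ, cm η *ᵥ x = 0 → cm R *ᵥ x = 0 → x = 0) {x : Fin N → ℂ}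
    (hΦx : Phi hα hη *ᵥ x = 0) (hRx : Rt R hα *ᵥ x = 0) : x = 0 := by
  have hK : Function.Injective (Kp hα).mulVec := mulVec_injective_iff_isUnit.2 (isUnit_Kp hα)
  suffices Kp hα *ᵥ x = 0 from hK (this.trans (mulVec_zero _).symm)
  refine hnd _ ?_ (hK ?_)
  · rw [← CFC.sqrt_mul_sqrt_self (cm η) hη.nonneg, mulVec_mulVec, Matrix.mul_assoc,
      ← mulVec_mulVec, ← Phi_eq hα hη, hΦx, mulVec_zero]
  · rw [mulVec_zero, mulVec_mulVec, mulVec_mulVec, ← Rt, hRx]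

theorem Bm_mulVec_sumElim (x y : Fin N → ℂ) :
    Bm R hα *ᵥ Sum.elim x y = Sum.elim (Rt R hα *ᵥ x) 0 := by
  simp [Bm, fromBlocks_mulVec]

theorem Om_zero_mulVec_sumElim (x y : Fin N → ℂ) :
    Om 0 hα hη *ᵥ Sum.elim x y =
      Sum.elim (-Complex.I • (Phi hα hη)ᵀ *ᵥ y) (Complex.I • Phi hα hη *ᵥ x) := by
  simp [Om, Omp, cm, fromBlocks_mulVec, Matrix.smul_mulVec, Matrix.neg_mulVec]

theorem sumElim_mem_range_Bm_iff {u v : Fin N → ℂ} :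
    Sum.elim u v ∈ LinearMap.range (Bm R hα).mulVecLin ↔
      u ∈ LinearMap.range (Rt R hα).mulVecLin ∧ v = 0 := by
  constructor
  · rintro ⟨w, hw⟩
    rw [mulVecLin_apply, ← Sum.elim_comp_inl_inr w, Bm_mulVec_sumElim, Sum.elim_eq_iff] at hw
    exact ⟨⟨_, hw.1⟩, hw.2.symm⟩
  · rintro ⟨⟨x, rfl⟩, rfl⟩
    exact ⟨Sum.elim x 0, Bm_mulVec_sumElim hα x 0⟩

theorem sumElim_mem_ker_Bm_inf_comap_Om_iff
    (hnd : ∀ x : Fin N → ℂ, cm η *ᵥ x = 0 → cm R *ᵥ x = 0 → x = 0) {x y : Fin N → ℂ} :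
    Sum.elim x y ∈ LinearMap.ker (Bm R hα).mulVecLin ⊓
        (LinearMap.range (Bm R hα).mulVecLin).comap (Om 0 hα hη).mulVecLin ↔
      x = 0 ∧ (Phi hα hη)ᵀ *ᵥ y ∈ LinearMap.range (Rt R hα).mulVecLin := by
  have hI : -Complex.I ≠ 0 := neg_ne_zero.2 Complex.I_ne_zero
  simp only [Submodule.mem_inf, LinearMap.mem_ker, Submodule.mem_comap, mulVecLin_apply,
    Bm_mulVec_sumElim, Om_zero_mulVec_sumElim, sumElim_mem_range_Bm_iff,
    Submodule.smul_mem_iff _ hI, ← Sum.elim_zero_zero, Sum.elim_eq_iff, smul_eq_zero,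
    Complex.I_ne_zero, false_or, and_true]
  constructor
  · rintro ⟨hRx, hy, hΦx⟩
    exact ⟨eq_zero_of_Phi_mulVec_eq_zero_of_Rt_mulVec_eq_zero hα hη hnd hΦx hRx, hy⟩
  · rintro ⟨rfl, hy⟩
    exact ⟨mulVec_zero _, hy, mulVec_zero _⟩

theorem finrank_ker_Bm_inf_comap_Om
    (hnd : ∀ x : Fin N → ℂ, cm η *ᵥ x = 0 → cm R *ᵥ x = 0 → x = 0) :
    Module.finrank ℂ ↥(LinearMap.ker (Bm R hα).mulVecLin ⊓
        (LinearMap.range (Bm R hα).mulVecLin).comap (Om 0 hα hη).mulVecLin) =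
      Module.finrank ℂ ↥((LinearMap.range (Rt R hα).mulVecLin).comap (Phi hα hη)ᵀ.mulVecLin) := by
  let ι : (Fin N → ℂ) →ₗ[ℂ] (Fin N ⊕ Fin N → ℂ) :=
    (LinearEquiv.sumArrowLequivProdArrow (Fin N) (Fin N) ℂ ℂ).symm.toLinearMap ∘ₗ
      LinearMap.inr ℂ _ _
  have hι : Function.Injective ι := by
    rw [LinearMap.coe_comp]
    exact (LinearEquiv.injective _).comp LinearMap.inr_injective
  suffices LinearMap.ker (Bm R hα).mulVecLin ⊓
      (LinearMap.range (Bm R hα).mulVecLin).comap (Om 0 hα hη).mulVecLin =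
      ((LinearMap.range (Rt R hα).mulVecLin).comap (Phi hα hη)ᵀ.mulVecLin).map ι by
    rw [this]
    exact (Submodule.equivMapOfInjective ι hι _).finrank_eq.symm
  ext w
  obtain ⟨x, y, rfl⟩ : ∃ x y, w = Sum.elim x y := ⟨_, _, (Sum.elim_comp_inl_inr w).symm⟩
  rw [sumElim_mem_ker_Bm_inf_comap_Om_iff hα hη hnd]
  constructor
  · rintro ⟨rfl, hy⟩
    exact ⟨y, hy, rfl⟩
  · rintro ⟨y', hy', hw⟩
    change Sum.elim (0 : Fin N → ℂ) y' = Sum.elim x y at hw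
    obtain ⟨rfl, rfl⟩ := Sum.elim_eq_iff.1 hw
    exact ⟨rfl, hy'⟩

end Reduction

theorem kernel_dimension_reduced_operator_general
    {N : ℕ}
    (α η R : Matrix (Fin N) (Fin N) ℝ)
    (hα : (cm α).PosDef) (hη : (cm η).PosSemidef)
    (hR : (cm R).PosSemidef)
    (hnd : ∀ x : Fin N → ℂ, cm η *ᵥ x = 0 → cm R *ᵥ x = 0 → x = 0) :
    Module.finrank ℂ
        ↥(LinearMap.ker (Bm R hα).mulVecLin ⊓
          Submodule.comap (Om 0 hα hη).mulVecLin (LinearMap.range (Bm R hα).mulVecLin)) =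
      R.rank ∧
    (Bm R hα).rank = R.rank := by
  refine ⟨?_, rank_Bm hα⟩
  have hsup : LinearMap.range (Rt R hα).mulVecLin ⊔ LinearMap.range (Phi hα hη)ᵀ.mulVecLin = ⊤ :=
    range_mulVecLin_sup_eq_top fun x hRx hΦx =>
      eq_zero_of_Phi_mulVec_eq_zero_of_Rt_mulVec_eq_zero hα hη hnd
        (by rwa [transpose_transpose] at hΦx) (by rwa [Rt_transpose hα hR.1] at hRx)
  have hdim := Submodule.finrank_comap_add_finrank_eq_of_sup_range_eq_top hsup
  rw [finrank_ker_Bm_inf_comap_Om hα hη hnd, ← rank_Rt hα]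
  exact Nat.add_right_cancel hdim

/-- **Dimension of the kernel of the reduced frequency operator** (`θ = 0`, nondegeneracy
`ker η ∩ ker R = {0}`). The kernel of `Ω₁` — identified with
`{w : Bw = 0 ∧ Ωw ∈ range B}` — has dimension `N_R = rank R = rank B`. -/
theorem kernel_dimension_reduced_operator
    {N : ℕ} (hN : 1 ≤ N)
    (α η R : Matrix (Fin N) (Fin N) ℝ)
    (hα : (cm α).PosDef) (hη : (cm η).PosSemidef)
    (hR : (cm R).PosSemidef) (hR0 : R ≠ 0)
    (hnd : ∀ x : Fin N → ℂ, cm η *ᵥ x = 0 → cm R *ᵥ x = 0 → x = 0) :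
    Module.finrank ℂ
        ↥(LinearMap.ker (Bm R hα).mulVecLin ⊓
          Submodule.comap (Om 0 hα hη).mulVecLin (LinearMap.range (Bm R hα).mulVecLin)) =
      R.rank ∧
    (Bm R hα).rank = R.rank :=
  kernel_dimension_reduced_operator_general α η R hα hη hR hnd
end
end
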